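/- arXiv:2303.10665 — 2 statements merged into one kernel-verified Lean document; each statement's English description precedes it below -/
import Mathlib

section
/- (Lipschitzness of the policy-induced joint distribution.) Let 𝒳, 𝒳⁰, 𝒰 be compact metric spaces and let Π be a set of policies such that each π_t(·|x, x⁰, μ) ∈ 𝒫(𝒰) is L_Π-Lipschitz in (x, x⁰, μ) ∈ 𝒳 × 𝒳⁰ × 𝒫(𝒳) with respect to W₁. Then the map (x⁰, μ) ↦ μ ⊗ π_t(x⁰, μ), sending (x⁰, μ) to the measure on 𝒳 × 𝒰 given by ∬ 1_A(x,u) π_t(du|x, x⁰, μ) μ(dx), is Lipschitz with respect to W₁ with constant (2 L_Π + 1), uniformly over π ∈ Π: W₁(μ* ⊗ π_t(x⁰*, μ*), μ ⊗ π_t(x⁰, μ)) ≤ (2 L_Π + 1) · (d(x⁰*, x⁰) + W₁(μ*, μ)). -/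
open MeasureTheory

/-- `W₁` distance on probability measures, via Kantorovich duality. -/
noncomputable def W1 {X : Type*} [MeasurableSpace X] [PseudoMetricSpace X]
    (μ ν : ProbabilityMeasure X) : ℝ :=
  ⨆ f : {f : X → ℝ // LipschitzWith 1 f},
    |∫ x, (f : X → ℝ) x ∂(μ : Measure X) - ∫ x, (f : X → ℝ) x ∂(ν : Measure X)|

lemma cont_integrable {Y : Type*} [MeasurableSpace Y] [MetricSpace Y] [CompactSpace Y]
    [BorelSpace Y] (ν : Measure Y) [IsFiniteMeasure ν] {f : Y → ℝ} (hf : Continuous f) :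
    Integrable f ν :=
  hf.integrable_of_hasCompactSupport (HasCompactSupport.of_compactSpace f)

lemma w1_nonneg {X : Type*} [MeasurableSpace X] [PseudoMetricSpace X]
    (μ ν : ProbabilityMeasure X) : 0 ≤ W1 μ ν :=
  Real.iSup_nonneg fun _ => abs_nonneg _

lemma w1_self {X : Type*} [MeasurableSpace X] [PseudoMetricSpace X]
    (μ : ProbabilityMeasure X) : W1 μ μ = 0 := by
  simp [W1]

lemma w1_bddAbove {X : Type*} [MeasurableSpace X] [MetricSpace X] [CompactSpace X]
    [BorelSpace X] (μ ν : ProbabilityMeasure X) :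
    BddAbove (Set.range fun f : {f : X → ℝ // LipschitzWith 1 f} =>
      |∫ x, (f : X → ℝ) x ∂(μ : Measure X) - ∫ x, (f : X → ℝ) x ∂(ν : Measure X)|) := by
  cases isEmpty_or_nonempty X with
  | inl h =>
    refine ⟨0, ?_⟩
    rintro r ⟨f, rfl⟩
    simp [Measure.eq_zero_of_isEmpty (μ : Measure X), Measure.eq_zero_of_isEmpty (ν : Measure X)]
  | inr h =>
    obtain ⟨p⟩ := h
    refine ⟨2 * Metric.diam (Set.univ : Set X), ?_⟩
    rintro r ⟨f, rfl⟩
    have hfc : Continuous (f : X → ℝ) := f.2.continuous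
    have hint : ∀ (κ : ProbabilityMeasure X),
        ∫ x, (f : X → ℝ) x ∂(κ : Measure X)
          = (∫ x, ((f : X → ℝ) x - (f : X → ℝ) p) ∂(κ : Measure X)) + (f : X → ℝ) p := by
      intro κ
      rw [integral_sub (cont_integrable _ hfc) (integrable_const _), integral_const]
      simp
    have hb : ∀ (κ : ProbabilityMeasure X),
        |∫ x, ((f : X → ℝ) x - (f : X → ℝ) p) ∂(κ : Measure X)|
          ≤ Metric.diam (Set.univ : Set X) := by
      intro κ
      have := norm_integral_le_of_norm_le_const (μ := (κ : Measure X))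
        (f := fun x => (f : X → ℝ) x - (f : X → ℝ) p)
        (C := Metric.diam (Set.univ : Set X)) ?_
      · simpa using this
      · filter_upwards with x
        have h1 : dist ((f : X → ℝ) x) ((f : X → ℝ) p) ≤ dist x p := by
          simpa using f.2.dist_le_mul x p
        have h2 : dist x p ≤ Metric.diam (Set.univ : Set X) :=
          Metric.dist_le_diam_of_mem (isCompact_univ.isBounded) (Set.mem_univ _) (Set.mem_univ _)
        simpa [Real.norm_eq_abs, Real.dist_eq] using h1.trans h2
    calc |∫ x, (f : X → ℝ) x ∂(μ : Measure X) - ∫ x, (f : X → ℝ) x ∂(ν : Measure X)|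
        = |(∫ x, ((f : X → ℝ) x - (f : X → ℝ) p) ∂(μ : Measure X))
            - ∫ x, ((f : X → ℝ) x - (f : X → ℝ) p) ∂(ν : Measure X)| := by
          rw [hint μ, hint ν]; congr 1; ring
      _ ≤ _ := by
          have := abs_sub (∫ x, ((f : X → ℝ) x - (f : X → ℝ) p) ∂(μ : Measure X))
            (∫ x, ((f : X → ℝ) x - (f : X → ℝ) p) ∂(ν : Measure X))
          calc _ ≤ _ := abs_sub _ _
            _ ≤ Metric.diam (Set.univ : Set X) + Metric.diam (Set.univ : Set X) :=
                add_le_add (hb μ) (hb ν)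
            _ = 2 * Metric.diam (Set.univ : Set X) := by ring

lemma le_w1 {X : Type*} [MeasurableSpace X] [MetricSpace X] [CompactSpace X]
    [BorelSpace X] (μ ν : ProbabilityMeasure X) {f : X → ℝ} (hf : LipschitzWith 1 f) :
    |∫ x, f x ∂(μ : Measure X) - ∫ x, f x ∂(ν : Measure X)| ≤ W1 μ ν :=
  le_ciSup (w1_bddAbove μ ν) (⟨f, hf⟩ : {f : X → ℝ // LipschitzWith 1 f})
/-- Lipschitzness of the policy-induced joint distribution. If every policy
`π ∈ Π` is an `L_Π`-Lipschitz kernel `(x,x⁰,μ) ↦ π_t(·|x,x⁰,μ) ∈ 𝒫(𝒰)` (in the `W₁` sense via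
Kantorovich duality), then `(x⁰,μ) ↦ μ ⊗ π_t(x⁰,μ)` is `(2L_Π+1)`-Lipschitz with respect to `W₁`
(with the sum metric on `𝒳 × 𝒰`, again via Kantorovich duality: `1`-Lipschitz test functions
`f'`, whose integral against `μ ⊗ π_t(x⁰,μ)` is `∬ f'(x,u) π_t(du|x,x⁰,μ) μ(dx)`),
uniformly over `π ∈ Π`. -/
theorem statement5 {X U X0 : Type*}
    [MetricSpace X] [CompactSpace X] [MeasurableSpace X] [BorelSpace X]
    [MetricSpace U] [CompactSpace U] [MeasurableSpace U] [BorelSpace U]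
    [MetricSpace X0] [CompactSpace X0] [MeasurableSpace X0] [BorelSpace X0]
    (L : ℝ) (hL : 0 < L)
    (Pi : Set (ℕ → X → X0 → ProbabilityMeasure X → ProbabilityMeasure U))
    (hPi : ∀ π ∈ Pi, ∀ (t : ℕ) (x x' : X) (x0 x0' : X0) (μ μ' : ProbabilityMeasure X)
        (g : U → ℝ), LipschitzWith 1 g →
      |∫ u, g u ∂(π t x x0 μ : Measure U) - ∫ u, g u ∂(π t x' x0' μ' : Measure U)|
        ≤ L * (dist x x' + dist x0 x0' + W1 μ μ')) :
    ∀ π ∈ Pi, ∀ (t : ℕ) (x0s x0 : X0) (μs μ : ProbabilityMeasure X) (f' : X × U → ℝ),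
      (∀ a b : X × U, |f' a - f' b| ≤ dist a.1 b.1 + dist a.2 b.2) →
      |(∫ x, ∫ u, f' (x, u) ∂(π t x x0s μs : Measure U) ∂(μs : Measure X))
        - ∫ x, ∫ u, f' (x, u) ∂(π t x x0 μ : Measure U) ∂(μ : Measure X)|
        ≤ (2 * L + 1) * (dist x0s x0 + W1 μs μ) := by
  intro π hπ t x0s x0 μs μ f' hf'
  set Fs : X → ℝ := fun x => ∫ u, f' (x, u) ∂(π t x x0s μs : Measure U) with hFs
  set F : X → ℝ := fun x => ∫ u, f' (x, u) ∂(π t x x0 μ : Measure U) with hF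
  have hWnn : 0 ≤ W1 μs μ := w1_nonneg μs μ
  have hD : (0:ℝ) ≤ dist x0s x0 + W1 μs μ := add_nonneg dist_nonneg hWnn
  -- sections of f' are 1-Lipschitz
  have hgu : ∀ x : X, LipschitzWith 1 (fun u => f' (x, u)) := by
    intro x
    apply LipschitzWith.of_dist_le_mul
    intro u v
    have h := hf' (x, u) (x, v)
    simp only [dist_self, zero_add] at h
    simpa [Real.dist_eq] using h
  -- pointwise bound between Fs and F
  have hAB : ∀ x : X, |Fs x - F x| ≤ L * (dist x0s x0 + W1 μs μ) := by
    intro x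
    have h := hPi π hπ t x x x0s x0 μs μ (fun u => f' (x, u)) (hgu x)
    simpa [dist_self] using h
  -- Lipschitz estimate for the inner integral, for fixed (x0', μ')
  have hFlip : ∀ (x0' : X0) (μ' : ProbabilityMeasure X) (x x' : X),
      |(∫ u, f' (x, u) ∂(π t x x0' μ' : Measure U))
        - ∫ u, f' (x', u) ∂(π t x' x0' μ' : Measure U)| ≤ (L + 1) * dist x x' := by
    intro x0' μ' x x'
    have h1 : |(∫ u, f' (x, u) ∂(π t x x0' μ' : Measure U))
        - ∫ u, f' (x', u) ∂(π t x x0' μ' : Measure U)| ≤ dist x x' := by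
      rw [← integral_sub (cont_integrable _ (hgu x).continuous)
        (cont_integrable _ (hgu x').continuous)]
      have := norm_integral_le_of_norm_le_const (μ := (π t x x0' μ' : Measure U))
        (f := fun u => f' (x, u) - f' (x', u)) (C := dist x x') ?_
      · simpa [measure_univ] using this
      · filter_upwards with u
        have h := hf' (x, u) (x', u)
        simp only [dist_self, add_zero] at h
        simpa [Real.norm_eq_abs] using h
    have h2 : |(∫ u, f' (x', u) ∂(π t x x0' μ' : Measure U))
        - ∫ u, f' (x', u) ∂(π t x' x0' μ' : Measure U)| ≤ L * dist x x' := by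
      have h := hPi π hπ t x x' x0' x0' μ' μ' (fun u => f' (x', u)) (hgu x')
      simpa [dist_self, w1_self] using h
    calc |(∫ u, f' (x, u) ∂(π t x x0' μ' : Measure U))
        - ∫ u, f' (x', u) ∂(π t x' x0' μ' : Measure U)|
        ≤ |(∫ u, f' (x, u) ∂(π t x x0' μ' : Measure U))
            - ∫ u, f' (x', u) ∂(π t x x0' μ' : Measure U)|
          + |(∫ u, f' (x', u) ∂(π t x x0' μ' : Measure U))
            - ∫ u, f' (x', u) ∂(π t x' x0' μ' : Measure U)| := by
          exact abs_sub_le _ _ _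
      _ ≤ dist x x' + L * dist x x' := add_le_add h1 h2
      _ = (L + 1) * dist x x' := by ring
  have hL1 : (0:ℝ) < L + 1 := by linarith
  -- F and Fs are Lipschitz, hence continuous, hence integrable
  have hFslip : LipschitzWith (Real.toNNReal (L + 1)) Fs := by
    apply LipschitzWith.of_dist_le_mul
    intro x x'
    have := hFlip x0s μs x x'
    simpa [Real.dist_eq, Real.coe_toNNReal _ hL1.le] using this
  have hFlip' : LipschitzWith (Real.toNNReal (L + 1)) F := by
    apply LipschitzWith.of_dist_le_mul
    intro x x'
    have := hFlip x0 μ x x'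
    simpa [Real.dist_eq, Real.coe_toNNReal _ hL1.le] using this
  have hIFs : Integrable Fs (μs : Measure X) := cont_integrable _ hFslip.continuous
  have hIF : Integrable F (μs : Measure X) := cont_integrable _ hFlip'.continuous
  -- step A
  have hA : |(∫ x, Fs x ∂(μs : Measure X)) - ∫ x, F x ∂(μs : Measure X)|
      ≤ L * (dist x0s x0 + W1 μs μ) := by
    rw [← integral_sub hIFs hIF]
    have := norm_integral_le_of_norm_le_const (μ := (μs : Measure X))
      (f := fun x => Fs x - F x) (C := L * (dist x0s x0 + W1 μs μ)) ?_
    · simpa [measure_univ] using this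
    · filter_upwards with x
      simpa [Real.norm_eq_abs] using hAB x
  -- step B
  have hB : |(∫ x, F x ∂(μs : Measure X)) - ∫ x, F x ∂(μ : Measure X)|
      ≤ (L + 1) * W1 μs μ := by
    set g : X → ℝ := fun x => (L + 1)⁻¹ * F x with hg
    have hglip : LipschitzWith 1 g := by
      apply LipschitzWith.of_dist_le_mul
      intro x x'
      have h := hFlip x0 μ x x'
      have : dist (g x) (g x') = (L + 1)⁻¹ * |F x - F x'| := by
        rw [Real.dist_eq, hg]
        simp only
        rw [← mul_sub, abs_mul, abs_of_pos (inv_pos.mpr hL1)]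
      rw [this]
      rw [inv_mul_le_iff₀ hL1]
      calc |F x - F x'| ≤ (L + 1) * dist x x' := h
        _ = (L + 1) * (1 * dist x x') := by ring
    have hle := le_w1 μs μ hglip
    have hgi : ∀ κ : ProbabilityMeasure X,
        ∫ x, g x ∂(κ : Measure X) = (L + 1)⁻¹ * ∫ x, F x ∂(κ : Measure X) := by
      intro κ; rw [hg]; exact integral_const_mul _ _
    rw [hgi, hgi] at hle
    rw [← mul_sub, abs_mul, abs_of_pos (inv_pos.mpr hL1)] at hle
    calc |(∫ x, F x ∂(μs : Measure X)) - ∫ x, F x ∂(μ : Measure X)|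
        = (L + 1) * ((L + 1)⁻¹ *
            |(∫ x, F x ∂(μs : Measure X)) - ∫ x, F x ∂(μ : Measure X)|) := by
          field_simp
      _ ≤ (L + 1) * W1 μs μ := by
          apply mul_le_mul_of_nonneg_left hle hL1.le
  calc |(∫ x, Fs x ∂(μs : Measure X)) - ∫ x, F x ∂(μ : Measure X)|
      ≤ |(∫ x, Fs x ∂(μs : Measure X)) - ∫ x, F x ∂(μs : Measure X)|
        + |(∫ x, F x ∂(μs : Measure X)) - ∫ x, F x ∂(μ : Measure X)| := abs_sub_le _ _ _
    _ ≤ L * (dist x0s x0 + W1 μs μ) + (L + 1) * W1 μs μ := add_le_add hA hB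
    _ ≤ (2 * L + 1) * (dist x0s x0 + W1 μs μ) := by nlinarith [dist_nonneg (x := x0s) (y := x0)]
end

section
/- (Lipschitzness of the closed-loop M3FC mean field transition.) Let 𝒳, 𝒰, 𝒳⁰, 𝒰⁰ be compact metric spaces. Assume the minor transition kernel p(·|x,u,x⁰,u⁰,μ) ∈ 𝒫(𝒳) is L_p-Lipschitz (W₁ on 𝒫(𝒳)) and the minor policy π_t(·|x, x⁰, μ) ∈ 𝒫(𝒰) is L_Π-Lipschitz. Define T(x⁰,u⁰,μ,h) := ∬ p(·|x,u,x⁰,u⁰,μ) h(dx,du). Then the map (x⁰, u⁰, μ) ↦ T(x⁰, u⁰, μ, μ ⊗ π_t(x⁰, μ)) is Lipschitz with constant L_T := (2 L_Π + 1) · (L_p + (L_p + 1) L_Π + (L_p + L_Π + 1)), uniformly over all policies π with the same Lipschitz constant L_Π. -/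
open MeasureTheory

section Helpers

variable {Y : Type*} [MetricSpace Y] [CompactSpace Y] [MeasurableSpace Y] [BorelSpace Y]

lemma lipschitzWith_of_abs {Z : Type*} [PseudoMetricSpace Z] {q : Z → ℝ} {L : ℝ} (hL : 0 ≤ L)
    (h : ∀ a b, |q a - q b| ≤ L * dist a b) : LipschitzWith (Real.toNNReal L) q := by
  apply LipschitzWith.of_dist_le_mul
  intro a b
  rw [Real.dist_eq]
  simpa [Real.coe_toNNReal L hL] using h a b

lemma lip_of_bound {Z : Type*} [PseudoMetricSpace Z] {q : Z → ℝ} {L : ℝ} (hL : 0 < L)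
    (h : ∀ a b, |q a - q b| ≤ L * dist a b) : LipschitzWith 1 (fun z => L⁻¹ * q z) := by
  apply LipschitzWith.of_dist_le_mul
  intro a b
  rw [Real.dist_eq, NNReal.coe_one, one_mul, ← mul_sub, abs_mul, abs_inv, abs_of_pos hL]
  calc L⁻¹ * |q a - q b| ≤ L⁻¹ * (L * dist a b) :=
        mul_le_mul_of_nonneg_left (h a b) (inv_nonneg.mpr hL.le)
    _ = dist a b := by field_simp

lemma cont_integrable_s6 (ν : Measure Y) [IsFiniteMeasure ν] {g : Y → ℝ} (hg : Continuous g) :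
    Integrable g ν :=
  hg.integrable_of_hasCompactSupport (HasCompactSupport.of_compactSpace g)

lemma abs_integral_le (ν : Measure Y) [IsProbabilityMeasure ν] {g : Y → ℝ} {C : ℝ}
    (h : ∀ x, |g x| ≤ C) : |∫ x, g x ∂ν| ≤ C := by
  have := norm_integral_le_of_norm_le_const (μ := ν) (f := g) (C := C) (ae_of_all _ h)
  simpa [measure_univ] using this

lemma abs_integral_sub_le (ν : Measure Y) [IsProbabilityMeasure ν]
    {g h : Y → ℝ} {C : ℝ} (hg : Integrable g ν) (hh : Integrable h ν)
    (hb : ∀ y, |g y - h y| ≤ C) : |∫ y, g y ∂ν - ∫ y, h y ∂ν| ≤ C := by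
  rw [← integral_sub hg hh]
  exact abs_integral_le ν hb

lemma W1_bddAbove (μ ν : ProbabilityMeasure Y) :
    BddAbove (Set.range fun f : {f : Y → ℝ // LipschitzWith 1 f} =>
      |∫ x, (f : Y → ℝ) x ∂(μ : Measure Y) - ∫ x, (f : Y → ℝ) x ∂(ν : Measure Y)|) := by
  have hne : Nonempty Y := μ.nonempty
  obtain ⟨y₀⟩ := hne
  obtain ⟨C, hC⟩ := Metric.isBounded_iff.mp (isCompact_univ : IsCompact (Set.univ : Set Y)).isBounded
  refine ⟨2 * C, ?_⟩
  rintro - ⟨f, rfl⟩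
  have hb : ∀ x, |f.1 x - f.1 y₀| ≤ C := by
    intro x
    have h1 : dist (f.1 x) (f.1 y₀) ≤ 1 * dist x y₀ := f.2.dist_le_mul x y₀
    rw [Real.dist_eq, one_mul] at h1
    exact h1.trans (hC trivial trivial)
  have hint : Integrable (fun x => f.1 x) (μ : Measure Y) :=
    cont_integrable_s6 _ f.2.continuous
  have hint' : Integrable (fun x => f.1 x) (ν : Measure Y) :=
    cont_integrable_s6 _ f.2.continuous
  have e1 : ∫ x, (f.1 x - f.1 y₀) ∂(μ : Measure Y) = ∫ x, f.1 x ∂(μ : Measure Y) - f.1 y₀ := by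
    rw [integral_sub hint (integrable_const _), integral_const]
    simp
  have e2 : ∫ x, (f.1 x - f.1 y₀) ∂(ν : Measure Y) = ∫ x, f.1 x ∂(ν : Measure Y) - f.1 y₀ := by
    rw [integral_sub hint' (integrable_const _), integral_const]
    simp
  have hA : |∫ x, (f.1 x - f.1 y₀) ∂(μ : Measure Y)| ≤ C := abs_integral_le _ hb
  have hB : |∫ x, (f.1 x - f.1 y₀) ∂(ν : Measure Y)| ≤ C := abs_integral_le _ hb
  rw [e1] at hA
  rw [e2] at hB
  have h1 := abs_le.mp hA
  have h2 := abs_le.mp hB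
  show |∫ x, f.1 x ∂(μ : Measure Y) - ∫ x, f.1 x ∂(ν : Measure Y)| ≤ 2 * C
  rw [abs_le]
  constructor <;> nlinarith [h1.1, h1.2, h2.1, h2.2]

lemma W1_nonneg (μ ν : ProbabilityMeasure Y) : 0 ≤ W1 μ ν := by
  have h0 : LipschitzWith 1 (fun _ : Y => (0 : ℝ)) :=
    (LipschitzWith.const (0 : ℝ)).weaken zero_le_one
  have := le_ciSup (W1_bddAbove μ ν) ⟨_, h0⟩
  simp at this
  exact this

lemma W1_self (μ : ProbabilityMeasure Y) : W1 μ μ = 0 := by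
  have h0 : LipschitzWith 1 (fun _ : Y => (0 : ℝ)) :=
    (LipschitzWith.const (0 : ℝ)).weaken zero_le_one
  haveI : Nonempty {f : Y → ℝ // LipschitzWith 1 f} := ⟨⟨_, h0⟩⟩
  refine le_antisymm (ciSup_le fun f => by simp) (W1_nonneg μ μ)

lemma abs_sub_le_W1 (μ ν : ProbabilityMeasure Y) {g : Y → ℝ} {L : ℝ} (hL : 0 < L)
    (hg : ∀ a b, |g a - g b| ≤ L * dist a b) :
    |∫ x, g x ∂(μ : Measure Y) - ∫ x, g x ∂(ν : Measure Y)| ≤ L * W1 μ ν := by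
  have hg' : LipschitzWith 1 (fun y => L⁻¹ * g y) := lip_of_bound hL hg
  have hle := le_ciSup (W1_bddAbove μ ν) (⟨_, hg'⟩ : {f : Y → ℝ // LipschitzWith 1 f})
  simp only at hle
  rw [integral_const_mul, integral_const_mul, ← mul_sub, abs_mul, abs_inv, abs_of_pos hL] at hle
  have := mul_le_mul_of_nonneg_left hle hL.le
  rwa [← mul_assoc, mul_inv_cancel₀ hL.ne', one_mul] at this

end Helpers

/-- Lipschitzness of the closed-loop M3FC mean field transition. If the minor
transition kernel `p` is `L_p`-Lipschitz and the minor policies `π` are `L_Π`-Lipschitz (in the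
`W₁` sense, via Kantorovich duality), then
`(x⁰,u⁰,μ) ↦ T(x⁰,u⁰,μ, μ ⊗ π_t(x⁰,μ)) = ∬ p(·|x,u,x⁰,u⁰,μ) π_t(du|x,x⁰,μ) μ(dx)` is Lipschitz
w.r.t. `W₁` with constant `L_T := (2L_Π+1)(L_p + (L_p+1)L_Π + (L_p+L_Π+1))`, uniformly over all
policies `π ∈ Π` with the same Lipschitz constant. -/
theorem statement6 {X U X0 U0 : Type*}
    [MetricSpace X] [CompactSpace X] [MeasurableSpace X] [BorelSpace X]
    [MetricSpace U] [CompactSpace U] [MeasurableSpace U] [BorelSpace U]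
    [MetricSpace X0] [CompactSpace X0] [MeasurableSpace X0] [BorelSpace X0]
    [MetricSpace U0] [CompactSpace U0] [MeasurableSpace U0] [BorelSpace U0]
    (Lp LPi : ℝ) (hLp : 0 < Lp) (hLPi : 0 < LPi)
    (p : X → U → X0 → U0 → ProbabilityMeasure X → ProbabilityMeasure X)
    (hp : ∀ (x x' : X) (u u' : U) (x0 x0' : X0) (u0 u0' : U0)
        (μ μ' : ProbabilityMeasure X) (f : X → ℝ), LipschitzWith 1 f →
      |∫ y, f y ∂(p x u x0 u0 μ : Measure X) - ∫ y, f y ∂(p x' u' x0' u0' μ' : Measure X)|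
        ≤ Lp * (dist x x' + dist u u' + dist x0 x0' + dist u0 u0' + W1 μ μ'))
    (Pi : Set (ℕ → X → X0 → ProbabilityMeasure X → ProbabilityMeasure U))
    (hPi : ∀ π ∈ Pi, ∀ (t : ℕ) (x x' : X) (x0 x0' : X0) (μ μ' : ProbabilityMeasure X)
        (g : U → ℝ), LipschitzWith 1 g →
      |∫ u, g u ∂(π t x x0 μ : Measure U) - ∫ u, g u ∂(π t x' x0' μ' : Measure U)|
        ≤ LPi * (dist x x' + dist x0 x0' + W1 μ μ')) :
    ∀ π ∈ Pi, ∀ (t : ℕ) (x0s x0 : X0) (u0s u0 : U0) (μs μ : ProbabilityMeasure X)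
      (f : X → ℝ), LipschitzWith 1 f →
      |(∫ x, ∫ u, ∫ y, f y ∂(p x u x0s u0s μs : Measure X)
            ∂(π t x x0s μs : Measure U) ∂(μs : Measure X))
        - ∫ x, ∫ u, ∫ y, f y ∂(p x u x0 u0 μ : Measure X)
            ∂(π t x x0 μ : Measure U) ∂(μ : Measure X)|
        ≤ ((2 * LPi + 1) * (Lp + (Lp + 1) * LPi + (Lp + LPi + 1)))
            * (dist x0s x0 + dist u0s u0 + W1 μs μ) := by
  intro π hπ t x0s x0 u0s u0 μs μ f hf
  have hW1nn : 0 ≤ W1 μs μ := W1_nonneg μs μ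
  have hd1 : (0:ℝ) ≤ dist x0s x0 := dist_nonneg
  have hd2 : (0:ℝ) ≤ dist u0s u0 := dist_nonneg
  set q : X → U → ℝ := fun x u => ∫ y, f y ∂(p x u x0 u0 μ : Measure X) with hq
  set qs : X → U → ℝ := fun x u => ∫ y, f y ∂(p x u x0s u0s μs : Measure X) with hqs
  set F : X → ℝ := fun x => ∫ u, qs x u ∂(π t x x0s μs : Measure U) with hF
  set G : X → ℝ := fun x => ∫ u, q x u ∂(π t x x0 μ : Measure U) with hG
  -- Lipschitz estimates for q and qs
  have hq_lip : ∀ (x x' : X) (u u' : U), |q x u - q x' u'| ≤ Lp * (dist x x' + dist u u') := by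
    intro x x' u u'
    have h := hp x x' u u' x0 x0 u0 u0 μ μ f hf
    simpa [W1_self] using h
  have hqs_lip : ∀ (x x' : X) (u u' : U), |qs x u - qs x' u'| ≤ Lp * (dist x x' + dist u u') := by
    intro x x' u u'
    have h := hp x x' u u' x0s x0s u0s u0s μs μs f hf
    simpa [W1_self] using h
  have hq_u : ∀ (x : X) (a b : U), |q x a - q x b| ≤ Lp * dist a b := by
    intro x a b
    have := hq_lip x x a b
    simpa using this
  have hqs_u : ∀ (x : X) (a b : U), |qs x a - qs x b| ≤ Lp * dist a b := by
    intro x a b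
    have := hqs_lip x x a b
    simpa using this
  have hq_cont : ∀ x : X, Continuous (fun u => q x u) :=
    fun x => (lipschitzWith_of_abs hLp.le (hq_u x)).continuous
  have hqs_cont : ∀ x : X, Continuous (fun u => qs x u) :=
    fun x => (lipschitzWith_of_abs hLp.le (hqs_u x)).continuous
  -- Lipschitz estimate for integrals against π, for Lp-Lipschitz integrands
  have hPiq : ∀ (A : U → ℝ), (∀ a b, |A a - A b| ≤ Lp * dist a b) →
      ∀ (x x' : X) (a b : X0) (m m' : ProbabilityMeasure X),
      |∫ u, A u ∂(π t x a m : Measure U) - ∫ u, A u ∂(π t x' b m' : Measure U)|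
        ≤ Lp * (LPi * (dist x x' + dist a b + W1 m m')) := by
    intro A hA x x' a b m m'
    have h1 := hPi π hπ t x x' a b m m' (fun u => Lp⁻¹ * A u) (lip_of_bound hLp hA)
    rw [integral_const_mul, integral_const_mul, ← mul_sub, abs_mul, abs_inv, abs_of_pos hLp] at h1
    have h2 := mul_le_mul_of_nonneg_left h1 hLp.le
    rwa [← mul_assoc, mul_inv_cancel₀ hLp.ne', one_mul] at h2
  -- G is Lipschitz
  have hGlip : ∀ x x', |G x - G x'| ≤ (Lp + Lp * LPi) * dist x x' := by
    intro x x'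
    have i1 : Integrable (fun u => q x u) (π t x x0 μ : Measure U) :=
      cont_integrable_s6 _ (hq_cont x)
    have i2 : Integrable (fun u => q x' u) (π t x x0 μ : Measure U) :=
      cont_integrable_s6 _ (hq_cont x')
    have e1 : |∫ u, q x u ∂(π t x x0 μ : Measure U) - ∫ u, q x' u ∂(π t x x0 μ : Measure U)|
        ≤ Lp * dist x x' := by
      refine abs_integral_sub_le _ i1 i2 (fun u => ?_)
      have := hq_lip x x' u u
      simpa using this
    have e2 := hPiq (fun u => q x' u) (hq_u x') x x' x0 x0 μ μ
    rw [dist_self, W1_self] at e2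
    have tri := abs_sub_le (G x) (∫ u, q x' u ∂(π t x x0 μ : Measure U)) (G x')
    have eG : ∀ z : X, G z = ∫ u, q z u ∂(π t z x0 μ : Measure U) := fun z => rfl
    rw [eG x, eG x'] at tri
    simp only [add_zero] at e2
    nlinarith [e1, e2, tri, dist_nonneg (x := x) (y := x'), hLp.le, hLPi.le]
  -- F is Lipschitz (needed for continuity/integrability)
  have hFlip : ∀ x x', |F x - F x'| ≤ (Lp + Lp * LPi) * dist x x' := by
    intro x x'
    have i1 : Integrable (fun u => qs x u) (π t x x0s μs : Measure U) :=
      cont_integrable_s6 _ (hqs_cont x)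
    have i2 : Integrable (fun u => qs x' u) (π t x x0s μs : Measure U) :=
      cont_integrable_s6 _ (hqs_cont x')
    have e1 : |∫ u, qs x u ∂(π t x x0s μs : Measure U) - ∫ u, qs x' u ∂(π t x x0s μs : Measure U)|
        ≤ Lp * dist x x' := by
      refine abs_integral_sub_le _ i1 i2 (fun u => ?_)
      have := hqs_lip x x' u u
      simpa using this
    have e2 := hPiq (fun u => qs x' u) (hqs_u x') x x' x0s x0s μs μs
    rw [dist_self, W1_self] at e2
    have tri := abs_sub_le (F x) (∫ u, qs x' u ∂(π t x x0s μs : Measure U)) (F x')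
    have eF : ∀ z : X, F z = ∫ u, qs z u ∂(π t z x0s μs : Measure U) := fun z => rfl
    rw [eF x, eF x'] at tri
    simp only [add_zero] at e2
    nlinarith [e1, e2, tri, dist_nonneg (x := x) (y := x'), hLp.le, hLPi.le]
  -- pointwise bound on |F - G|
  have hFG : ∀ x : X, |F x - G x|
      ≤ Lp * (dist x0s x0 + dist u0s u0 + W1 μs μ)
        + Lp * (LPi * (dist x0s x0 + W1 μs μ)) := by
    intro x
    have i1 : Integrable (fun u => qs x u) (π t x x0s μs : Measure U) :=
      cont_integrable_s6 _ (hqs_cont x)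
    have i2 : Integrable (fun u => q x u) (π t x x0s μs : Measure U) :=
      cont_integrable_s6 _ (hq_cont x)
    have e1 : |∫ u, qs x u ∂(π t x x0s μs : Measure U) - ∫ u, q x u ∂(π t x x0s μs : Measure U)|
        ≤ Lp * (dist x0s x0 + dist u0s u0 + W1 μs μ) := by
      refine abs_integral_sub_le _ i1 i2 (fun u => ?_)
      have h := hp x x u u x0s x0 u0s u0 μs μ f hf
      simpa using h
    have e2 := hPiq (fun u => q x u) (hq_u x) x x x0s x0 μs μ
    rw [dist_self] at e2
    have tri := abs_sub_le (F x) (∫ u, q x u ∂(π t x x0s μs : Measure U)) (G x)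
    have eF : F x = ∫ u, qs x u ∂(π t x x0s μs : Measure U) := rfl
    have eG : G x = ∫ u, q x u ∂(π t x x0 μ : Measure U) := rfl
    rw [eF, eG] at tri
    simp only [zero_add] at e2
    linarith [e1, e2, tri]
  -- integrability of F and G
  have hLsum : (0:ℝ) < Lp + Lp * LPi := by positivity
  have hFcont : Continuous F := (lipschitzWith_of_abs hLsum.le hFlip).continuous
  have hGcont : Continuous G := (lipschitzWith_of_abs hLsum.le hGlip).continuous
  have iF : Integrable F (μs : Measure X) := cont_integrable_s6 _ hFcont
  have iG : Integrable G (μs : Measure X) := cont_integrable_s6 _ hGcont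
  have T1 : |∫ x, F x ∂(μs : Measure X) - ∫ x, G x ∂(μs : Measure X)|
      ≤ Lp * (dist x0s x0 + dist u0s u0 + W1 μs μ)
        + Lp * (LPi * (dist x0s x0 + W1 μs μ)) :=
    abs_integral_sub_le _ iF iG hFG
  have T2 : |∫ x, G x ∂(μs : Measure X) - ∫ x, G x ∂(μ : Measure X)|
      ≤ (Lp + Lp * LPi) * W1 μs μ :=
    abs_sub_le_W1 μs μ hLsum hGlip
  have tri := abs_sub_le (∫ x, F x ∂(μs : Measure X)) (∫ x, G x ∂(μs : Measure X))
    (∫ x, G x ∂(μ : Measure X))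
  show |∫ x, F x ∂(μs : Measure X) - ∫ x, G x ∂(μ : Measure X)|
      ≤ ((2 * LPi + 1) * (Lp + (Lp + 1) * LPi + (Lp + LPi + 1)))
          * (dist x0s x0 + dist u0s u0 + W1 μs μ)
  nlinarith [T1, T2, tri, hLp.le, hLPi.le, hd1, hd2, hW1nn,
    mul_nonneg (mul_nonneg hLp.le hLPi.le) hd1,
    mul_nonneg (mul_nonneg hLp.le hLPi.le) hd2,
    mul_nonneg (mul_nonneg hLp.le hLPi.le) hW1nn,
    mul_nonneg hLp.le hd1, mul_nonneg hLp.le hd2, mul_nonneg hLp.le hW1nn,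
    mul_nonneg (mul_nonneg (mul_nonneg hLp.le hLPi.le) hLPi.le) hd1,
    mul_nonneg (mul_nonneg (mul_nonneg hLp.le hLPi.le) hLPi.le) hd2,
    mul_nonneg (mul_nonneg (mul_nonneg hLp.le hLPi.le) hLPi.le) hW1nn,
    mul_nonneg (mul_nonneg hLPi.le hLPi.le) hd1,
    mul_nonneg (mul_nonneg hLPi.le hLPi.le) hd2,
    mul_nonneg (mul_nonneg hLPi.le hLPi.le) hW1nn,
    mul_nonneg hLPi.le hd1, mul_nonneg hLPi.le hd2, mul_nonneg hLPi.le hW1nn]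
end
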